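/- Let X be a nonempty T0, quasi-sober, Noetherian topological space of finite Krull dimension. Then every dimension function δ : X → ℤ on X is bounded: there exist integers a ≤ b with a ≤ δ(x) ≤ b for all x ∈ X. -/

import Mathlib

/-!
Statement 9: Let `X` be a nonempty T0, quasi-sober, Noetherian topological space of finite
Krull dimension. Then every dimension function `δ : X → ℤ` on `X` is bounded.
-/

/-- `y` is an *immediate specialization* of `x` if `y ∈ closure {x}`, `y ≠ x`, and every
point `z` with `z ∈ closure {x}` and `y ∈ closure {z}` equals `x` or `y`. -/
def ImmediateSpecialization {X : Type*} [TopologicalSpace X] (x y : X) : Prop :=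
  y ∈ closure {x} ∧ y ≠ x ∧ ∀ z : X, z ∈ closure {x} → y ∈ closure {z} → z = x ∨ z = y

/-- A *dimension function* on a topological space `X` is a map `δ : X → ℤ` such that
`δ(x) = δ(y) + 1` whenever `y` is an immediate specialization of `x`. -/
def IsDimensionFunction {X : Type*} [TopologicalSpace X] (δ : X → ℤ) : Prop :=
  ∀ x y : X, ImmediateSpecialization x y → δ x = δ y + 1

/-!
Under the specialization order, a T0 quasi-sober space is order-isomorphic to its poset of
irreducible closed subsets (a set corresponds to its generic point), and immediate
specializations become covering relations. So a dimension function is a map on a poset of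
finite dimension `N` that goes up by exactly one along every cover. Such a poset is well-founded
in both directions, so any `a ≤ b` are joined by a saturated chain, whence
`f a ≤ f b ≤ f a + N`. Every irreducible closed set lies in one of the finitely many irreducible
components of the Noetherian space, so `δ` stays within `N` of finitely many values.
-/

section CovByAddOne

variable {α : Type*} [PartialOrder α] {f : α → ℤ}

instance FiniteDimensionalOrder.wellFoundedLT [FiniteDimensionalOrder α] : WellFoundedLT α :=
  ⟨SetRel.IsWellFounded.of_finiteDimensional {(a, b) : α × α | a < b}⟩

instance FiniteDimensionalOrder.wellFoundedGT [FiniteDimensionalOrder α] : WellFoundedGT α :=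
  ⟨SetRel.IsWellFounded.inv_of_finiteDimensional {(a, b) : α × α | a < b}⟩

theorem exists_ltSeries_eq_add_length [WellFoundedLT α] [WellFoundedGT α]
    (hf : ∀ a b, a ⋖ b → f b = f a + 1) {a b : α} (hab : a ≤ b) :
    ∃ p : LTSeries α, f b = f a + p.length := by
  obtain ⟨c, rfl, n, rfl, hc⟩ := exists_covBy_seq_of_wellFoundedLT_wellFoundedGT_of_le hab
  have hfc : ∀ i ≤ n, f (c i) = f (c 0) + i := by
    intro i hi
    induction i with
    | zero => simp
    | succ i ih => rw [hf _ _ (hc i hi), ih (by omega)]; push_cast; ring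
  exact ⟨⟨n, fun i ↦ c i, fun i ↦ (hc i i.2).lt⟩, hfc n le_rfl⟩

theorem le_and_le_add_length_longestOf [FiniteDimensionalOrder α]
    (hf : ∀ a b, a ⋖ b → f b = f a + 1) {a b : α} (hab : a ≤ b) :
    f a ≤ f b ∧ f b ≤ f a + (LTSeries.longestOf α).length := by
  obtain ⟨p, hp⟩ := exists_ltSeries_eq_add_length hf hab
  have := p.longestOf_is_longest
  omega

theorem bddBelow_bddAbove_range_of_covBy [FiniteDimensionalOrder α]
    (hf : ∀ a b, a ⋖ b → f b = f a + 1) {s : Set α} (hs : s.Finite)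
    (hsup : ∀ a, ∃ b ∈ s, a ≤ b) : BddBelow (Set.range f) ∧ BddAbove (Set.range f) := by
  obtain ⟨L, hL⟩ := (hs.image f).bddBelow
  obtain ⟨U, hU⟩ := (hs.image f).bddAbove
  constructor
  · refine ⟨L - (LTSeries.longestOf α).length, ?_⟩
    rintro - ⟨a, rfl⟩
    obtain ⟨b, hb, hab⟩ := hsup a
    have := hL (Set.mem_image_of_mem f hb)
    have := le_and_le_add_length_longestOf hf hab
    omega
  · refine ⟨U, ?_⟩
    rintro - ⟨a, rfl⟩
    obtain ⟨b, hb, hab⟩ := hsup a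
    exact (le_and_le_add_length_longestOf hf hab).1.trans (hU (Set.mem_image_of_mem f hb))

end CovByAddOne

open TopologicalSpace in
theorem finiteDimensionalOrder_irreducibleCloseds {X : Type*} [TopologicalSpace X] [Nonempty X]
    (hdim : topologicalKrullDim X ≠ ⊤) : FiniteDimensionalOrder (IrreducibleCloseds X) := by
  obtain ⟨x⟩ := ‹Nonempty X›
  have : Nonempty (IrreducibleCloseds X) :=
    ⟨⟨closure {x}, isIrreducible_singleton.closure, isClosed_closure⟩⟩
  exact Order.finiteDimensionalOrder_iff_krullDim_ne_bot_and_top.2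
    ⟨Order.krullDim_eq_bot_iff.not.2 (not_isEmpty_of_nonempty _), hdim⟩

section SpecializationOrder

open TopologicalSpace

attribute [local instance] specializationOrder

variable {X : Type*} [TopologicalSpace X] [T0Space X]

theorem specializationOrder_le_iff_mem_closure {x y : X} : y ≤ x ↔ y ∈ closure {x} :=
  specializes_iff_mem_closure

theorem immediateSpecialization_iff_covBy {x y : X} : ImmediateSpecialization x y ↔ y ⋖ x := by
  simp only [ImmediateSpecialization, ← specializationOrder_le_iff_mem_closure]
  constructor
  · rintro ⟨hyx, hne, hmin⟩
    refine ⟨hyx.lt_of_ne hne, fun z hyz hzx ↦ ?_⟩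
    rcases hmin z hzx.le hyz.le with rfl | rfl
    exacts [hzx.ne rfl, hyz.ne rfl]
  · intro h
    exact ⟨h.le, h.ne, fun z hzx hyz ↦ (h.eq_or_eq hyz hzx).symm⟩

variable [QuasiSober X] {δ : X → ℤ}

theorem IsDimensionFunction.apply_irreducibleSetEquivPoints_of_covBy (hδ : IsDimensionFunction δ)
    {S T : IrreducibleCloseds X} (h : S ⋖ T) :
    δ (irreducibleSetEquivPoints T) = δ (irreducibleSetEquivPoints S) + 1 :=
  hδ _ _ <| immediateSpecialization_iff_covBy.2 <|
    (apply_covBy_apply_iff irreducibleSetEquivPoints).2 h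

theorem IsDimensionFunction.bddBelow_bddAbove_range [Nonempty X] [NoetherianSpace X]
    (hdim : topologicalKrullDim X ≠ ⊤) (hδ : IsDimensionFunction δ) :
    BddBelow (Set.range δ) ∧ BddAbove (Set.range δ) := by
  have := finiteDimensionalOrder_irreducibleCloseds hdim
  have hcomponents : {S : IrreducibleCloseds X | (S : Set X) ∈ irreducibleComponents X}.Finite :=
    NoetherianSpace.finite_irreducibleComponents.preimage SetLike.coe_injective.injOn
  rw [← irreducibleSetEquivPoints.surjective.range_comp]
  refine bddBelow_bddAbove_range_of_covBy (fun _ _ ↦ hδ.apply_irreducibleSetEquivPoints_of_covBy)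
    hcomponents fun S ↦ ?_
  obtain ⟨C, hC, hSC⟩ :=
    exists_mem_irreducibleComponents_subset_of_isIrreducible _ S.isIrreducible
  exact ⟨⟨C, hC.1, isClosed_of_mem_irreducibleComponents C hC⟩, hC, hSC⟩

end SpecializationOrder

/-- Every dimension function on a nonempty T0, quasi-sober, Noetherian topological space of
finite Krull dimension is bounded. -/
theorem dimensionFunction_bounded
    {X : Type*} [TopologicalSpace X] [Nonempty X] [T0Space X] [QuasiSober X]
    [TopologicalSpace.NoetherianSpace X] (hdim : topologicalKrullDim X ≠ ⊤)
    {δ : X → ℤ} (hδ : IsDimensionFunction δ) :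
    ∃ a b : ℤ, a ≤ b ∧ ∀ x : X, a ≤ δ x ∧ δ x ≤ b := by
  obtain ⟨⟨a, ha⟩, ⟨b, hb⟩⟩ := hδ.bddBelow_bddAbove_range hdim
  have hδa (x : X) : a ≤ δ x := ha ⟨x, rfl⟩
  have hδb (x : X) : δ x ≤ b := hb ⟨x, rfl⟩
  exact ⟨a, b, (hδa (Classical.arbitrary X)).trans (hδb _), fun x ↦ ⟨hδa x, hδb x⟩⟩
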